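/- Let T be a finite tree and o, p vertices, v a neighbour of p with d_T(o, {p,v}) = d_T(o,p). In the general monomer-dimer model, the covariance ∂R(T,o)/∂w_{pv} = ∂ℰ(T,pv)/∂x_o (times positive weights) is ≤ 0 if d_T(o, pv) is even (including o ∈ {p,v}) and ≥ 0 if d_T(o, pv) is odd. Equivalently, 1_{o∉{p,v}} Z_{T−o−p−v} Z_T − Z_{T−o} Z_{T−p−v} has sign (−1)^{d_T(o,pv)+1}. -/

import Mathlib

/-!
Write `Q_S(a)` for the covariance numerator `1_{a∉{p,v}} Z_{S−a−p−v} Z_S − Z_{S−a} Z_{S−p−v}`.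
Expanding both `Z_S` and `Z_{S−p−v}` at a vertex `a ∉ {p,v}` (either `a` is a monomer or it is
matched to a neighbour `u`) gives `Q_S(a) = −∑_u w_{au} Q_{S−a}(u)`. By the same recursion,
`Q_S(u)` vanishes when `u` cannot reach `p` inside `S`; in a tree only the neighbour of `a` on
the path to `p` survives, so each step along the geodesic from `o` to `p` flips the sign, down to
`Q_S(p) = −Z_{S−p} Z_{S−p−v} ≤ 0`. The condition `d(o,p) ≤ d(o,v)` keeps `v` off that geodesic.
-/

open Finset
open scoped Classical

/-- The set of matchings (dimeric configurations) of `G` using only vertices of `S`. -/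
noncomputable def matchingsOn {V : Type*} (G : SimpleGraph V) (S : Finset V) :
    Finset (Finset (Sym2 V)) :=
  S.sym2.powerset.filter fun D =>
    (∀ e ∈ D, e ∈ G.edgeSet) ∧
      (D : Set (Sym2 V)).Pairwise fun e f => ∀ v, v ∈ e → v ∉ f

/-- General monomer-dimer partition function with vertex weights `x` and edge
weights `w`:  `Z_G = Σ_D (Π_{e∈D} w_e)(Π_{v uncovered} x_v)`. -/
noncomputable def Zgen {V : Type*} (G : SimpleGraph V) (S : Finset V)
    (x : V → ℝ) (w : Sym2 V → ℝ) : ℝ :=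
  ∑ D ∈ matchingsOn G S,
    (∏ e ∈ D, w e) * ∏ v ∈ S.filter (fun v => ∀ e ∈ D, v ∉ e), x v

namespace SimpleGraph

variable {V : Type*} {G : SimpleGraph V}

lemma IsAcyclic.mem_support_of_adj_of_ne (hG : G.IsAcyclic)
    {a b u p : V} (hau : G.Adj a u) {P : G.Walk u p} (hP : (P.cons hau).IsPath)
    (hab : G.Adj a b) (hbu : b ≠ u) (W : G.Walk b p) : a ∈ W.support := by
  by_contra haW
  have hpath : (W.bypass.cons hab).IsPath :=
    W.bypass_isPath.cons fun h => haW (W.support_bypass_subset_support h)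
  have hpaths := congrArg Subtype.val ((hG.subsingleton_path a p).elim ⟨_, hpath⟩ ⟨_, hP⟩)
  injection hpaths with _ hbu'
  exact hbu hbu'

lemma dist_lt_of_mem_support_of_length_eq_dist {o p v : V}
    {P : G.Walk o p} (hP : P.length = G.dist o p) (hv : v ∈ P.support) (hvp : v ≠ p) :
    G.dist o v < G.dist o p :=
  hP ▸ (G.dist_le _).trans_lt (P.length_takeUntil_lt_length hv hvp)

end SimpleGraph

section MonomerDimer

variable {V : Type*} {G : SimpleGraph V} {S : Finset V} {D : Finset (Sym2 V)} {a u : V}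

lemma mem_matchingsOn :
    D ∈ matchingsOn G S ↔ D ⊆ S.sym2 ∧ (∀ e ∈ D, e ∈ G.edgeSet) ∧
      (D : Set (Sym2 V)).Pairwise fun e f => ∀ v, v ∈ e → v ∉ f := by
  simp [matchingsOn]

lemma notMem_of_mem_matchingsOn (hD : D ∈ matchingsOn G S) {e : Sym2 V} (he : e ∈ D)
    {y : V} (hy : y ∉ S) : y ∉ e :=
  fun hye => hy (mem_sym2_iff.mp ((mem_matchingsOn.mp hD).1 he) y hye)

lemma Zgen_nonneg {x : V → ℝ} {w : Sym2 V → ℝ} (hx : ∀ v, 0 ≤ x v) (hw : ∀ e, 0 ≤ w e) :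
    0 ≤ Zgen G S x w :=
  sum_nonneg fun _ _ => mul_nonneg (prod_nonneg fun e _ => hw e) (prod_nonneg fun v _ => hx v)

variable [DecidableEq V]

noncomputable def matchingWeight (x : V → ℝ) (w : Sym2 V → ℝ) (S : Finset V)
    (D : Finset (Sym2 V)) : ℝ :=
  (∏ e ∈ D, w e) * ∏ v ∈ S.filter (fun v => ∀ e ∈ D, v ∉ e), x v

lemma Zgen_eq_sum_matchingWeight (x : V → ℝ) (w : Sym2 V → ℝ) :
    Zgen G S x w = ∑ D ∈ matchingsOn G S, matchingWeight x w S D := by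
  -- not `rfl`: `Zgen` decides its filter classically, `matchingWeight` with `[DecidableEq V]`
  unfold Zgen matchingWeight
  congr!

lemma filter_matchingsOn_uncovered :
    (matchingsOn G S).filter (fun D => ∀ e ∈ D, a ∉ e) = matchingsOn G (S.erase a) := by
  ext D
  simp only [mem_filter, mem_matchingsOn, subset_iff, mem_sym2_iff, mem_erase]
  constructor
  · rintro ⟨⟨hsub, hedge, hpair⟩, hfree⟩
    exact ⟨fun e he y hy => ⟨fun h => hfree e he (h ▸ hy), hsub he y hy⟩, hedge, hpair⟩
  · rintro ⟨hsub, hedge, hpair⟩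
    exact ⟨⟨fun e he y hy => (hsub he y hy).2, hedge, hpair⟩,
      fun e he hae => (hsub he a hae).1 rfl⟩

lemma insert_mem_matchingsOn (hadj : G.Adj a u) (ha : a ∈ S) (hu : u ∈ S)
    (hD : D ∈ matchingsOn G ((S.erase a).erase u)) : insert s(a, u) D ∈ matchingsOn G S := by
  obtain ⟨hsub, hedge, hpair⟩ := mem_matchingsOn.mp hD
  have hfree : ∀ e ∈ D, ∀ y ∈ s(a, u), y ∉ e := by
    rintro e he y hy
    rcases Sym2.mem_iff.mp hy with rfl | rfl <;>
      exact notMem_of_mem_matchingsOn hD he (by simp)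
  refine mem_matchingsOn.mpr ⟨?_, ?_, ?_⟩
  · refine insert_subset (mem_sym2_iff.mpr ?_) (hsub.trans (sym2_mono ?_))
    · rintro y hy
      rcases Sym2.mem_iff.mp hy with rfl | rfl <;> assumption
    · exact (erase_subset _ _).trans (erase_subset _ _)
  · simpa [forall_mem_insert] using ⟨hadj, hedge⟩
  · rw [coe_insert, Set.pairwise_insert]
    exact ⟨hpair, fun e he _ => ⟨fun y hy hye => hfree e he y hy hye,
      fun y hye hy => hfree e he y hy hye⟩⟩

lemma erase_mem_matchingsOn (hD : D ∈ matchingsOn G S) (he : s(a, u) ∈ D) :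
    D.erase s(a, u) ∈ matchingsOn G ((S.erase a).erase u) := by
  obtain ⟨hsub, hedge, hpair⟩ := mem_matchingsOn.mp hD
  refine mem_matchingsOn.mpr ⟨fun e he' => mem_sym2_iff.mpr fun y hy => ?_,
    fun e he' => hedge e (mem_of_mem_erase he'),
    hpair.mono (coe_subset.mpr (erase_subset _ _))⟩
  have hdisj := hpair (mem_coe.mpr (mem_of_mem_erase he')) (mem_coe.mpr he)
    (ne_of_mem_erase he') y hy
  simp only [mem_erase]
  refine ⟨?_, ?_, mem_sym2_iff.mp (hsub (mem_of_mem_erase he')) y hy⟩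
  · rintro rfl; exact hdisj (Sym2.mem_mk_right _ _)
  · rintro rfl; exact hdisj (Sym2.mem_mk_left _ _)

lemma matchingWeight_of_uncovered {x : V → ℝ} {w : Sym2 V → ℝ} (ha : a ∈ S)
    (hD : D ∈ matchingsOn G (S.erase a)) :
    matchingWeight x w S D = x a * matchingWeight x w (S.erase a) D := by
  have hfilter : S.filter (fun v => ∀ e ∈ D, v ∉ e)
      = insert a ((S.erase a).filter (fun v => ∀ e ∈ D, v ∉ e)) := by
    rw [filter_erase, insert_erase (mem_filter.mpr ⟨ha, fun e he =>
      notMem_of_mem_matchingsOn hD he (notMem_erase a S)⟩)]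
  rw [matchingWeight, matchingWeight, hfilter, prod_insert (by simp)]
  ring

lemma matchingWeight_insert {x : V → ℝ} {w : Sym2 V → ℝ}
    (hD : D ∈ matchingsOn G ((S.erase a).erase u)) :
    matchingWeight x w S (insert s(a, u) D)
      = w s(a, u) * matchingWeight x w ((S.erase a).erase u) D := by
  have hnot : s(a, u) ∉ D := fun h =>
    notMem_of_mem_matchingsOn hD h (by simp) (Sym2.mem_mk_left a u)
  have hfilter : S.filter (fun v => ∀ e ∈ insert s(a, u) D, v ∉ e)
      = ((S.erase a).erase u).filter (fun v => ∀ e ∈ D, v ∉ e) := by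
    ext z
    simp only [mem_filter, mem_erase, forall_mem_insert, Sym2.mem_iff, not_or]
    tauto
  rw [matchingWeight, matchingWeight, prod_insert hnot, hfilter]
  ring

lemma filter_matchingsOn_covered (ha : a ∈ S) :
    (matchingsOn G S).filter (fun D => ¬∀ e ∈ D, a ∉ e)
      = ((S.erase a).filter (G.Adj a)).biUnion
          fun u => (matchingsOn G ((S.erase a).erase u)).image (insert s(a, u)) := by
  ext D
  simp only [mem_filter, mem_biUnion, mem_image, mem_erase, not_forall, not_not]
  constructor
  · rintro ⟨hD, e, he, hae⟩
    obtain ⟨u, rfl⟩ := Sym2.mem_iff_exists.mp hae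
    have hadj : G.Adj a u := (mem_matchingsOn.mp hD).2.1 _ he
    have hu : u ∈ S := mem_sym2_iff.mp ((mem_matchingsOn.mp hD).1 he) u (Sym2.mem_mk_right a u)
    exact ⟨u, ⟨⟨hadj.ne', hu⟩, hadj⟩, D.erase s(a, u), erase_mem_matchingsOn hD he,
      insert_erase he⟩
  · rintro ⟨u, ⟨⟨-, hu⟩, hadj⟩, D, hD, rfl⟩
    exact ⟨insert_mem_matchingsOn hadj ha hu hD, _, mem_insert_self _ _, Sym2.mem_mk_left a u⟩

lemma pairwiseDisjoint_image_insert_matchingsOn :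
    (((S.erase a).filter (G.Adj a) : Finset V) : Set V).PairwiseDisjoint
      fun u => (matchingsOn G ((S.erase a).erase u)).image (insert s(a, u)) := by
  intro u _ u' _ hne
  rw [Function.onFun, Finset.disjoint_left]
  rintro _ hmem hmem'
  obtain ⟨D, hD, rfl⟩ := mem_image.mp hmem
  obtain ⟨D', -, hDD'⟩ := mem_image.mp hmem'
  rcases mem_insert.mp (hDD' ▸ mem_insert_self _ _ : s(a, u') ∈ insert s(a, u) D) with h | h
  · exact hne (Sym2.congr_right.mp h).symm
  · exact notMem_of_mem_matchingsOn hD h (by simp) (Sym2.mem_mk_left a u')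

lemma Zgen_eq_add_sum (x : V → ℝ) (w : Sym2 V → ℝ) (ha : a ∈ S) :
    Zgen G S x w = x a * Zgen G (S.erase a) x w +
      ∑ u ∈ (S.erase a).filter (G.Adj a), w s(a, u) * Zgen G ((S.erase a).erase u) x w := by
  rw [Zgen_eq_sum_matchingWeight, ← sum_filter_add_sum_filter_not _ (fun D => ∀ e ∈ D, a ∉ e),
    filter_matchingsOn_uncovered, filter_matchingsOn_covered ha,
    sum_biUnion pairwiseDisjoint_image_insert_matchingsOn,
    sum_congr rfl fun D hD => matchingWeight_of_uncovered ha hD, ← mul_sum,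
    ← Zgen_eq_sum_matchingWeight]
  congr 1
  refine sum_congr rfl fun u _ => ?_
  rw [sum_image fun D hD D' hD' h => ?_, sum_congr rfl fun D hD => matchingWeight_insert hD,
    ← mul_sum, ← Zgen_eq_sum_matchingWeight]
  have hnot : ∀ D ∈ matchingsOn G ((S.erase a).erase u), s(a, u) ∉ D := fun D hD h =>
    notMem_of_mem_matchingsOn hD h (by simp) (Sym2.mem_mk_left a u)
  rw [← erase_insert (hnot D hD), h, erase_insert (hnot D' hD')]

variable (G) in
/-- By the formula for `w_pv ∂R(S,a)/∂w_pv`, this is `Z_S² / x_a · ∂R(S,a)/∂w_pv`, so it has the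
sign of the covariance. -/
noncomputable def monomerDimerCov (x : V → ℝ) (w : Sym2 V → ℝ) (p v : V) (S : Finset V)
    (a : V) : ℝ :=
  (if a ≠ p ∧ a ≠ v then (1 : ℝ) else 0) *
      (Zgen G (((S.erase a).erase p).erase v) x w * Zgen G S x w) -
    Zgen G (S.erase a) x w * Zgen G ((S.erase p).erase v) x w

lemma monomerDimerCov_eq_neg_sum {x : V → ℝ} {w : Sym2 V → ℝ} {p v : V} (ha : a ∈ S)
    (hap : a ≠ p) (hav : a ≠ v) :
    monomerDimerCov G x w p v S a = -∑ u ∈ (S.erase a).filter (G.Adj a),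
      w s(a, u) * monomerDimerCov G x w p v (S.erase a) u := by
  set N := (S.erase a).filter (G.Adj a)
  have hZpv : Zgen G ((S.erase p).erase v) x w
      = x a * Zgen G (((S.erase a).erase p).erase v) x w +
        ∑ u ∈ N, (if u ≠ p ∧ u ≠ v then (1 : ℝ) else 0) *
          (w s(a, u) * Zgen G ((((S.erase a).erase u).erase p).erase v) x w) := by
    have herase : ((S.erase p).erase v).erase a = ((S.erase a).erase p).erase v := by
      rw [erase_right_comm, erase_right_comm (a := p)]
    simp only [ite_mul, one_mul, zero_mul]
    rw [Zgen_eq_add_sum x w (by simp [ha, hap, hav] : a ∈ (S.erase p).erase v), herase,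
      ← sum_filter, filter_filter]
    congr 1
    refine sum_congr (by ext; simp; tauto) fun u _ => ?_
    rw [erase_right_comm (s := (S.erase a).erase p), erase_right_comm (s := S.erase a) (a := p)]
  rw [monomerDimerCov, if_pos ⟨hap, hav⟩, Zgen_eq_add_sum x w ha, hZpv, ← sum_neg_distrib]
  calc _ = ∑ u ∈ N, (Zgen G (((S.erase a).erase p).erase v) x w *
          (w s(a, u) * Zgen G ((S.erase a).erase u) x w) -
        Zgen G (S.erase a) x w * ((if u ≠ p ∧ u ≠ v then (1 : ℝ) else 0) *
          (w s(a, u) * Zgen G ((((S.erase a).erase u).erase p).erase v) x w))) := by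
        rw [sum_sub_distrib, ← mul_sum, ← mul_sum]
        ring
    _ = _ := sum_congr rfl fun u _ => by rw [monomerDimerCov]; ring

lemma monomerDimerCov_eq_zero_of_not_exists_walk {x : V → ℝ} {w : Sym2 V → ℝ} {p v : V}
    (hpv : G.Adj p v) (hp : p ∈ S) (ha : a ∈ S)
    (hna : ¬∃ W : G.Walk a p, ∀ z ∈ W.support, z ∈ S) :
    monomerDimerCov G x w p v S a = 0 := by
  induction S using Finset.strongInduction generalizing a with
  | H S ih =>
    have hap : a ≠ p := by
      rintro rfl
      exact hna ⟨.nil, by simpa using ha⟩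
    have hav : a ≠ v := by
      rintro rfl
      exact hna ⟨.cons hpv.symm .nil, by simp [ha, hp]⟩
    rw [monomerDimerCov_eq_neg_sum ha hap hav, neg_eq_zero]
    refine sum_eq_zero fun u hu => ?_
    obtain ⟨huSa, hadj⟩ := mem_filter.mp hu
    rw [ih _ (erase_ssubset ha) (mem_erase.mpr ⟨hap.symm, hp⟩) huSa, mul_zero]
    rintro ⟨W, hW⟩
    exact hna ⟨.cons hadj W, by simpa [ha] using fun z hz => mem_of_mem_erase (hW z hz)⟩

lemma monomerDimerCov_sign (hG : G.IsAcyclic) {x : V → ℝ} {w : Sym2 V → ℝ}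
    (hx : ∀ v, 0 ≤ x v) (hw : ∀ e, 0 ≤ w e) {p v : V} (hpv : G.Adj p v)
    (P : G.Walk a p) (hP : P.IsPath) (hPS : ∀ z ∈ P.support, z ∈ S) (hvP : v ∉ P.support) :
    (-1) ^ P.length * monomerDimerCov G x w p v S a ≤ 0 := by
  induction P generalizing S with
  | nil =>
    rw [SimpleGraph.Walk.length_nil, pow_zero, one_mul, monomerDimerCov, if_neg fun h => h.1 rfl,
      zero_mul, zero_sub, neg_nonpos]
    exact mul_nonneg (Zgen_nonneg hx hw) (Zgen_nonneg hx hw)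
  | @cons a u p hau P ih =>
    obtain ⟨hPpath, haP⟩ := SimpleGraph.Walk.cons_isPath_iff hau P |>.mp hP
    have haS : a ∈ S := hPS a (SimpleGraph.Walk.start_mem_support _)
    have hap : a ≠ p := fun h => haP (h ▸ P.end_mem_support)
    have hav : a ≠ v := fun h => hvP (h ▸ SimpleGraph.Walk.start_mem_support _)
    have hPSa : ∀ z ∈ P.support, z ∈ S.erase a := fun z hz =>
      mem_erase.mpr ⟨fun h => haP (h ▸ hz), hPS z (List.mem_cons_of_mem _ hz)⟩
    have hu : u ∈ (S.erase a).filter (G.Adj a) :=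
      mem_filter.mpr ⟨hPSa u P.start_mem_support, hau⟩
    have hsum : ∑ b ∈ (S.erase a).filter (G.Adj a),
        w s(a, b) * monomerDimerCov G x w p v (S.erase a) b
          = w s(a, u) * monomerDimerCov G x w p v (S.erase a) u := by
      refine sum_eq_single_of_mem u hu fun b hb hbu => ?_
      obtain ⟨hbSa, hab⟩ := mem_filter.mp hb
      rw [monomerDimerCov_eq_zero_of_not_exists_walk hpv (hPSa p P.end_mem_support) hbSa,
        mul_zero]
      rintro ⟨W, hW⟩
      exact notMem_erase a S (hW a (hG.mem_support_of_adj_of_ne hau hP hab hbu W))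
    have hsign := ih hpv hPpath hPSa (fun h => hvP (List.mem_cons_of_mem _ h))
    rw [monomerDimerCov_eq_neg_sum haS hap hav, hsum, SimpleGraph.Walk.length_cons]
    calc _ = w s(a, u) * ((-1) ^ P.length * monomerDimerCov G x w p v (S.erase a) u) := by ring
      _ ≤ 0 := mul_nonpos_of_nonneg_of_nonpos (hw _) hsign

end MonomerDimer

/-- on a finite tree `T`, for a vertex `o` and an edge `pv` with
`d_T(o,{p,v}) = d_T(o,p)`, the quantity
`1_{o∉{p,v}} Z_{T−o−p−v} Z_T − Z_{T−o} Z_{T−p−v}` is `≤ 0` if `d_T(o,pv)` is even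
and `≥ 0` if it is odd (equivalently, the covariance
`∂R(T,o)/∂w_{pv} = ∂ℰ(T,pv)/∂x_o` has sign `(−1)^{d_T(o,pv)+1}`). -/
theorem stmt_16 {V : Type*} [Fintype V] [DecidableEq V] (T : SimpleGraph V)
    (hT : T.IsTree) (x : V → ℝ) (w : Sym2 V → ℝ)
    (hx : ∀ v, 0 < x v) (hw : ∀ e, 0 < w e)
    (o p v : V) (hpv : T.Adj p v) (hd : T.dist o p ≤ T.dist o v) :
    (Even (T.dist o p) →
        (if o ≠ p ∧ o ≠ v then (1 : ℝ) else 0) *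
              (Zgen T (((Finset.univ.erase o).erase p).erase v) x w *
                Zgen T Finset.univ x w) ≤
          Zgen T (Finset.univ.erase o) x w *
            Zgen T ((Finset.univ.erase p).erase v) x w) ∧
      (Odd (T.dist o p) →
        Zgen T (Finset.univ.erase o) x w *
            Zgen T ((Finset.univ.erase p).erase v) x w ≤
          (if o ≠ p ∧ o ≠ v then (1 : ℝ) else 0) *
              (Zgen T (((Finset.univ.erase o).erase p).erase v) x w *
                Zgen T Finset.univ x w)) := by
  obtain ⟨P, hP, hlen⟩ := hT.connected.exists_path_of_dist o p
  have hvP : v ∉ P.support := fun hv =>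
    (T.dist_lt_of_mem_support_of_length_eq_dist hlen hv hpv.ne').not_ge hd
  have hsign := monomerDimerCov_sign hT.isAcyclic (fun z => (hx z).le) (fun e => (hw e).le) hpv
    P hP (fun z _ => mem_univ z) hvP
  rw [hlen, monomerDimerCov] at hsign
  constructor
  · intro heven
    rw [heven.neg_one_pow, one_mul] at hsign
    linarith
  · intro hodd
    rw [hodd.neg_one_pow] at hsign
    linarith
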